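/- arXiv:2604.06084 — 2 statements merged into one kernel-verified Lean document; each statement's English description precedes it below -/
import Mathlib

section
/- Let R be a commutative ring, R^s ⊆ R a subring, ∂_s : R → R^s an R^s-linear map, and δ_s ∈ R with ∂_s(δ_s) = 1, satisfying f = ∂_s(f)α_s + s(f) for an involution s fixing R^s. Set B = R ⊗_{R^s} R. Define cup : R → B ⊗_R B by cup(1) = δ_s ⊗ 1 ⊗ 1 − 1 ⊗ 1 ⊗ s(δ_s) and cap : B ⊗_R B → R by cap(f ⊗ g ⊗ h) = f·∂_s(g)·h. Then the zigzag identity holds: the composite B → B ⊗_R B ⊗_R B → B given by (id_B ⊗ cap) ∘ (cup ⊗ id_B) equals the identity of B, and likewise (cap ⊗ id_B) ∘ (id_B ⊗ cup) = id_B. -/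
open scoped TensorProduct

/-- The zigzag identities for `B = R ⊗_{R^s} R`.  Here `R` is a commutative ring, `R^s` a
subring fixed by an involution `s`, `∂` (written `d`) is the `R^s`-linear Demazure
operator with values in `R^s` satisfying `f = d f * α + s f`, and `δ` satisfies `d δ = 1`.
Under the identification `B ⊗_R B ≅ R ⊗_{R^s} R ⊗_{R^s} R`, the composite
`(id_B ⊗ cap) ∘ (cup ⊗ id_B)`, where `cup 1 = δ ⊗ 1 ⊗ 1 - 1 ⊗ 1 ⊗ s δ` and
`cap (f ⊗ g ⊗ h) = f * d g * h`, sends `f ⊗ g` to `(f δ) ⊗ (d 1 * g) - f ⊗ (d (s δ) * g)`,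
and the composite `(cap ⊗ id_B) ∘ (id_B ⊗ cup)` sends `f ⊗ g` to
`(f * d (g δ)) ⊗ 1 - (f * d g) ⊗ s δ`; both equal the identity of `B`. -/
theorem zigzag_identities {R : Type*} [CommRing R] (Rs : Subring R)
    (s : R →+* R) (hs : ∀ f : R, s (s f) = f) (hfix : ∀ x ∈ Rs, s x = x)
    (α δ : R) (hreg : ∀ r : R, α * r = 0 → r = 0)
    (d : R →ₗ[Rs] R) (hdmem : ∀ f : R, d f ∈ Rs)
    (hdem : ∀ f : R, f = d f * α + s f) (hδ : d δ = 1) :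
    (∀ f g : R,
      ((f * δ) ⊗ₜ[Rs] (d 1 * g) - f ⊗ₜ[Rs] (d (s δ) * g) : R ⊗[Rs] R) = f ⊗ₜ[Rs] g) ∧
    (∀ f g : R,
      ((f * d (g * δ)) ⊗ₜ[Rs] (1 : R) - (f * d g) ⊗ₜ[Rs] (s δ) : R ⊗[Rs] R)
        = f ⊗ₜ[Rs] g) := by
  -- moving an element of Rs across the tensor
  have hmove : ∀ (c : R), c ∈ Rs → ∀ x y : R,
      ((x * c) ⊗ₜ[Rs] y : R ⊗[Rs] R) = x ⊗ₜ[Rs] (c * y) := by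
    intro c hc x y
    have h1 : (x * c : R) = (⟨c, hc⟩ : Rs) • x := by
      simp [Subring.smul_def, mul_comm]
    have h2 : (c * y : R) = (⟨c, hc⟩ : Rs) • y := by
      simp [Subring.smul_def]
    rw [h1, h2, TensorProduct.smul_tmul]
  -- d 1 = 0
  have hd1 : d 1 = 0 := by
    apply hreg
    have h := hdem 1
    have h1 : s (1 : R) = 1 := map_one s
    linear_combination -h - h1
  -- s δ = δ - α
  have hsδ : s δ = δ - α := by
    have h := hdem δ
    rw [hδ] at h
    linear_combination -h
  -- s α = -α
  have hsα : s α = -α := by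
    have h := congrArg s hsδ
    rw [hs, map_sub, hsδ] at h
    linear_combination h
  -- d α = 2
  have hdα : d α = 2 := by
    have h0 : d α - 2 = 0 := by
      apply hreg
      have h := hdem α
      rw [hsα] at h
      linear_combination -h
    linear_combination h0
  -- d (s δ) = -1
  have hdsδ : d (s δ) = -1 := by
    rw [hsδ, map_sub, hδ, hdα]; ring
  -- twisted Leibniz rule
  have hleib : ∀ f g : R, d (f * g) = d f * g + s f * d g := by
    intro f g
    have h0 : d (f * g) - (d f * g + s f * d g) = 0 := by
      apply hreg
      have h1 := hdem (f * g)
      have h2 := hdem f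
      have h3 := hdem g
      have hm : s (f * g) = s f * s g := map_mul s f g
      linear_combination -h1 + g * h2 + s f * h3 - hm
    linear_combination h0
  constructor
  · intro f g
    rw [hd1, hdsδ]
    simp [TensorProduct.tmul_neg, TensorProduct.neg_tmul]
  · intro f g
    have h1 : ((f * d (g * δ)) ⊗ₜ[Rs] (1 : R) : R ⊗[Rs] R)
        = f ⊗ₜ[Rs] (d (g * δ) * 1) := hmove _ (hdmem _) f 1
    have h2 : ((f * d g) ⊗ₜ[Rs] (s δ) : R ⊗[Rs] R)
        = f ⊗ₜ[Rs] (d g * s δ) := hmove _ (hdmem _) f (s δ)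
    rw [h1, h2, ← TensorProduct.tmul_sub]
    congr 1
    rw [hleib g δ, hδ, hsδ]
    linear_combination -(hdem g)
end

section
/- Let R = Sym(V*), s an involution, R^s the invariant subring, and δ_s ∈ R with ∂_s(δ_s) = 1. Then the R^s-algebra R is a free left R^s-module with basis {1, δ_s}; equivalently, B_s = R ⊗_{R^s} R is a free left R-module with basis {1 ⊗ 1, δ_s ⊗ 1}. -/
/-!
From `∂ δ = 1` we get `α = δ - s δ`, hence `s α = -α`. Applying `s` to
`α · ∂ f = f - s f` and cancelling `α` shows that every `∂ f` is `s`-invariant; then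
`f = (f - ∂ f · δ) + ∂ f · δ` with both coefficients invariant gives spanning. Applying `s` to a
relation `a + b δ = 0` with invariant `a, b` and subtracting gives `b α = 0`, hence `b = 0 = a`.
-/

section Involution

variable {R : Type*} [CommRing R] {s : R →+* R}

theorem map_sub_map_self_of_involutive (hs : ∀ f, s (s f) = f) (x : R) :
    s (x - s x) = -(x - s x) := by
  rw [map_sub, hs]
  ring

theorem map_demazure_of_involutive (hs : ∀ f, s (s f) = f) {x : R}
    (hreg : IsLeftRegular (x - s x)) {d : R → R} (hd : ∀ f, (x - s x) * d f = f - s f) (f : R) :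
    s (d f) = d f := by
  have hsf := congrArg s (hd f)
  rw [map_mul, map_sub, hs, map_sub_map_self_of_involutive hs] at hsf
  exact hreg (by linear_combination -hsf - hd f)

theorem linearIndependent_one_of_isLeftRegular_sub_map {δ : R} (hreg : IsLeftRegular (δ - s δ)) :
    LinearIndependent (s.eqLocus (RingHom.id R)) ![1, δ] := by
  refine LinearIndependent.pair_iff.mpr fun a b hab => ?_
  have ha : s a = a := a.2
  have hb : s b = b := b.2
  have h : (a : R) + b * δ = 0 := by simpa [Subring.smul_def] using hab
  have hs : (a : R) + b * s δ = 0 := by simpa [ha, hb] using congrArg s h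
  have hb0 : (b : R) = 0 := hreg (by linear_combination h - hs)
  have ha0 : (a : R) = 0 := by simpa [hb0] using h
  exact ⟨Subtype.ext ha0, Subtype.ext hb0⟩

theorem span_one_eq_top_of_demazure {δ : R} {d : R → R} (hd : ∀ f, (δ - s δ) * d f = f - s f)
    (hdinv : ∀ f, s (d f) = d f) :
    Submodule.span (s.eqLocus (RingHom.id R)) {1, δ} = ⊤ := by
  refine Submodule.eq_top_iff'.mpr fun f => Submodule.mem_span_pair.mpr ?_
  have hrest : s (f - d f * δ) = f - d f * δ := by
    rw [map_sub, map_mul, hdinv]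
    linear_combination hd f
  exact ⟨⟨f - d f * δ, hrest⟩, ⟨d f, hdinv f⟩, by simp [Subring.smul_def]⟩

end Involution

/-- Let `R = Sym(V*)` (viewed abstractly as a commutative ring) with ring involution `s`,
invariant subring `R^s = {x | s x = x}`, and Demazure operator `d` (so `α * d f = f - s f`
for a nonzerodivisor `α`), and suppose `δ` satisfies `d δ = 1` (Demazure surjectivity).
Then `R` is a free left `R^s`-module with basis `{1, δ}`. -/
theorem free_basis_one_delta {R : Type*} [CommRing R]
    (s : R →+* R) (hs : ∀ f : R, s (s f) = f)
    (α δ : R) (hreg : ∀ r : R, α * r = 0 → r = 0)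
    (d : R → R) (hd : ∀ f : R, α * d f = f - s f) (hδ : d δ = 1) :
    ∃ b : Module.Basis (Fin 2) (RingHom.eqLocus s (RingHom.id R)) R,
      b 0 = 1 ∧ b 1 = δ := by
  have hα : α = δ - s δ := by simpa [hδ] using hd δ
  subst hα
  have hreg : IsLeftRegular (δ - s δ) := isLeftRegular_iff_right_eq_zero_of_mul.mpr hreg
  have hspan := span_one_eq_top_of_demazure hd (map_demazure_of_involutive hs hreg hd)
  have hli := linearIndependent_one_of_isLeftRegular_sub_map hreg
  have htop : ⊤ ≤ Submodule.span (s.eqLocus (RingHom.id R)) (Set.range ![1, δ]) := by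
    rw [Matrix.range_cons_cons_empty, hspan]
  exact ⟨.mk hli htop, Module.Basis.mk_apply hli htop 0, Module.Basis.mk_apply hli htop 1⟩
end
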